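/- Degree bound on the unimodular multiplier: with A, U, H as in the Hermite decomposition U·A = H of a full-row-rank matrix A ∈ S^{n×n} with deg_D A_{ij} ≤ d, every entry of U satisfies deg_D U_{ij} ≤ (n−1)d. -/

import Mathlib

/-- Abstract presentation of a skew (Ore/differential) polynomial ring `S = K[D; δ]`:
`S` is a ring containing `K` via `ι`, with a distinguished element `D` satisfying the
commutation rule `D * a = a * D + δ a`, and every element of `S` is (uniquely) a finite
sum `∑ aₙ Dⁿ`, with coefficients `coeff` supported on `supp`. -/
structure DiffPolyRing (K : Type) [CommRing K] (S : Type) [Ring S] (δ : K → K) where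
  ι : K →+* S
  D : S
  comm_rule : ∀ a : K, D * ι a = ι a * D + ι (δ a)
  coeff : S → ℕ → K
  supp : S → Finset ℕ
  mem_supp : ∀ f n, n ∈ supp f ↔ coeff f n ≠ 0
  coeff_add : ∀ f g n, coeff (f + g) n = coeff f n + coeff g n
  coeff_ext : ∀ f g : S, (∀ n, coeff f n = coeff g n) → f = g
  coeff_monomial : ∀ (a : K) (i n : ℕ), coeff (ι a * D ^ i) n = if n = i then a else 0
  repr_sum : ∀ f : S, f = ∑ n ∈ supp f, ι (coeff f n) * D ^ n

namespace DiffPolyRing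

variable {K S : Type} [CommRing K] [Ring S] {δ : K → K}

/-- Degree in the variable `D`, with `degD 0 = ⊥` (i.e. `-∞`). -/
noncomputable def degD (R : DiffPolyRing K S δ) (f : S) : WithBot ℕ := (R.supp f).max

/-- Degree in `D` as a natural number (`0` for the zero polynomial). -/
noncomputable def natDegD (R : DiffPolyRing K S δ) (f : S) : ℕ := WithBot.unbotD 0 (R.degD f)

/-- `f` is monic: its leading coefficient (in `D`) is `1`. -/
noncomputable def Monic (R : DiffPolyRing K S δ) (f : S) : Prop :=
  R.coeff f (R.natDegD f) = 1

/-- `H` is in Hermite form: upper triangular, monic diagonal entries, and each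
off-diagonal entry has `D`-degree strictly less than the diagonal entry below it. -/
noncomputable def HermiteForm (R : DiffPolyRing K S δ) {n : ℕ}
    (H : Matrix (Fin n) (Fin n) S) : Prop :=
  (∀ i j, j < i → H i j = 0) ∧ (∀ i, R.Monic (H i i)) ∧
    (∀ i j, i < j → R.degD (H i j) < R.degD (H j j))

/-- The rows of `A` are left `S`-linearly independent. -/
def FullRowRank {n : ℕ} (A : Matrix (Fin n) (Fin n) S) : Prop :=
  ∀ c : Fin n → S, (∀ j, (∑ i, c i * A i j) = 0) → c = 0

end DiffPolyRing

/-
Let `V = U⁻¹`, so that `V H = A`, and put `m = (n - 1) d`. For a row `c` of elements of degree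
`≤ m`, `(c V) H = c A` has degree `≤ m + d = n d`, and back-substitution through the Hermite form
`H` (triangular, with each diagonal entry of maximal degree in its column) shows that `c V` has
degree `≤ n d` as well. If `deg U i j > m`, then `c V = q eᵢ` forces `c = q · (row i of U)`,
whose `j`-th entry has degree `deg q + deg U i j > m` unless `q = 0`. So the spaces
`{c V}` (of dimension `n (m + 1)` over `K`) and `{q eᵢ : deg q ≤ n d}` (dimension `n d + 1`) meet
trivially inside the rows of degree `≤ n d` (dimension `n (n d + 1)`), whence `n d + 1 ≤ n d`.
-/

open Finset Matrix

namespace DiffPolyRing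

variable {K S : Type} [CommRing K] [Ring S] {δ : K → K} (R : DiffPolyRing K S δ)

noncomputable def coeffAddHom (n : ℕ) : S →+ K where
  toFun f := R.coeff f n
  map_zero' := by simpa using (R.coeff_add 0 0 n).symm
  map_add' f g := R.coeff_add f g n

@[simp]
lemma coeff_zero (n : ℕ) : R.coeff 0 n = 0 :=
  (R.coeffAddHom n).map_zero

lemma coeff_sub (f g : S) (n : ℕ) : R.coeff (f - g) n = R.coeff f n - R.coeff g n :=
  (R.coeffAddHom n).map_sub f g

lemma coeff_sum {α : Type} (s : Finset α) (f : α → S) (n : ℕ) :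
    R.coeff (∑ a ∈ s, f a) n = ∑ a ∈ s, R.coeff (f a) n :=
  map_sum (R.coeffAddHom n) f s

lemma coeff_sum_monomial (c : ℕ → K) (s : Finset ℕ) (n : ℕ) :
    R.coeff (∑ i ∈ s, R.ι (c i) * R.D ^ i) n = if n ∈ s then c n else 0 := by
  simp only [coeff_sum, coeff_monomial]
  exact Finset.sum_ite_eq s n c

lemma coeff_eq_zero_of_notMem_supp {f : S} {n : ℕ} (h : n ∉ R.supp f) : R.coeff f n = 0 := by
  simpa [R.mem_supp] using h

lemma coeff_ι_mul (a : K) (f : S) (n : ℕ) : R.coeff (R.ι a * f) n = a * R.coeff f n := by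
  have h : R.ι a * f = ∑ i ∈ R.supp f, R.ι (a * R.coeff f i) * R.D ^ i := by
    conv_lhs => rw [R.repr_sum f]
    simp only [Finset.mul_sum, ← mul_assoc, map_mul]
  rw [h, coeff_sum_monomial]
  split_ifs with hn
  · rfl
  · rw [R.coeff_eq_zero_of_notMem_supp hn, mul_zero]

lemma degD_le_iff {f : S} {w : WithBot ℕ} :
    R.degD f ≤ w ↔ ∀ m : ℕ, w < m → R.coeff f m = 0 := by
  refine ⟨fun h m hm => ?_, fun h => Finset.max_le fun m hm => ?_⟩
  · by_contra hne
    exact (Finset.le_max ((R.mem_supp f m).2 hne)).trans h |>.not_gt hm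
  · exact not_lt.1 fun hlt => (R.mem_supp f m).1 hm (h m hlt)

lemma le_degD_of_coeff_ne_zero {f : S} {m : ℕ} (h : R.coeff f m ≠ 0) :
    (m : WithBot ℕ) ≤ R.degD f :=
  Finset.le_max ((R.mem_supp f m).2 h)

lemma eq_zero_of_degD_le_of_coeff_eq_zero {f : S} {t : ℕ} (hf : R.degD f ≤ t)
    (hc : ∀ i ≤ t, R.coeff f i = 0) : f = 0 := by
  refine R.coeff_ext f 0 fun i => ?_
  rw [coeff_zero]
  rcases le_or_gt i t with hi | hi
  · exact hc i hi
  · exact R.degD_le_iff.1 hf i (by exact_mod_cast hi)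

@[simp]
lemma degD_zero : R.degD (0 : S) = ⊥ :=
  le_bot_iff.1 (R.degD_le_iff.2 fun m _ => R.coeff_zero m)

lemma degD_eq_natDegD {f : S} (hf : f ≠ 0) : R.degD f = R.natDegD f := by
  obtain ⟨k, hk⟩ := WithBot.ne_bot_iff_exists.1 fun h0 : R.degD f = ⊥ =>
    hf (by rw [R.repr_sum f, Finset.max_eq_bot.1 h0, Finset.sum_empty])
  rw [natDegD, ← hk, WithBot.unbotD_coe]
  rfl

lemma coeff_natDegD_ne_zero {f : S} (hf : f ≠ 0) : R.coeff f (R.natDegD f) ≠ 0 :=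
  (R.mem_supp f _).1 (Finset.mem_of_max (R.degD_eq_natDegD hf))

lemma degD_add_le (f g : S) : R.degD (f + g) ≤ max (R.degD f) (R.degD g) :=
  R.degD_le_iff.2 fun m hm => by
    rw [R.coeff_add, R.degD_le_iff.1 le_sup_left m hm, R.degD_le_iff.1 le_sup_right m hm, add_zero]

lemma degD_sub_le (f g : S) : R.degD (f - g) ≤ max (R.degD f) (R.degD g) :=
  R.degD_le_iff.2 fun m hm => by
    rw [R.coeff_sub, R.degD_le_iff.1 le_sup_left m hm, R.degD_le_iff.1 le_sup_right m hm, sub_zero]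

lemma degD_sum_le {α : Type} (s : Finset α) (f : α → S) {w : WithBot ℕ}
    (h : ∀ a ∈ s, R.degD (f a) ≤ w) : R.degD (∑ a ∈ s, f a) ≤ w :=
  R.degD_le_iff.2 fun m hm => by
    rw [coeff_sum]
    exact Finset.sum_eq_zero fun a ha => R.degD_le_iff.1 (h a ha) m hm

lemma degD_monomial_le (a : K) (i : ℕ) : R.degD (R.ι a * R.D ^ i) ≤ i :=
  R.degD_le_iff.2 fun m hm => by
    rw [coeff_monomial, if_neg (by exact_mod_cast hm.ne')]

lemma eq_sum_range_of_degD_le {f : S} {t : ℕ} (hf : R.degD f ≤ t) :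
    f = ∑ i ∈ range (t + 1), R.ι (R.coeff f i) * R.D ^ i := by
  refine R.coeff_ext _ _ fun n => ?_
  rw [coeff_sum_monomial]
  split_ifs with hn
  · rfl
  · exact R.degD_le_iff.1 hf n (by exact_mod_cast (not_lt.1 (mem_range.not.1 hn)))

lemma D_mul_eq_sum {f : S} {t : ℕ} (hf : R.degD f ≤ t) : R.D * f = ∑ i ∈ range (t + 1),
    (R.ι (R.coeff f i) * R.D ^ (i + 1) + R.ι (δ (R.coeff f i)) * R.D ^ i) := by
  conv_lhs => rw [R.eq_sum_range_of_degD_le hf, Finset.mul_sum]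
  refine sum_congr rfl fun i _ => ?_
  rw [← mul_assoc, R.comm_rule, add_mul, mul_assoc, ← pow_succ']

lemma degD_D_mul_le {f : S} {t : ℕ} (hf : R.degD f ≤ t) : R.degD (R.D * f) ≤ (t + 1 : ℕ) := by
  rw [R.D_mul_eq_sum hf]
  refine R.degD_sum_le _ _ fun i hi => (R.degD_add_le _ _).trans (max_le ?_ ?_)
  all_goals refine (R.degD_monomial_le _ _).trans ?_
  all_goals have := mem_range.1 hi; exact_mod_cast (by omega)

lemma coeff_D_mul_of_degD_le {f : S} {t : ℕ} (hf : R.degD f ≤ t) :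
    R.coeff (R.D * f) (t + 1) = R.coeff f t := by
  rw [R.D_mul_eq_sum hf, coeff_sum, sum_range_succ, sum_eq_zero fun i hi => ?_]
  · simp [coeff_add, coeff_monomial]
  · have := mem_range.1 hi
    rw [coeff_add, coeff_monomial, coeff_monomial, if_neg (by omega), if_neg (by omega), add_zero]

lemma degD_Dpow_mul_le {g : S} {b : ℕ} (hg : R.degD g ≤ b) (i : ℕ) :
    R.degD (R.D ^ i * g) ≤ (i + b : ℕ) := by
  induction i with
  | zero => simpa using hg
  | succ i ih => simpa [pow_succ', mul_assoc, add_right_comm] using R.degD_D_mul_le ih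

lemma coeff_Dpow_mul_of_degD_le {g : S} {b : ℕ} (hg : R.degD g ≤ b) (i : ℕ) :
    R.coeff (R.D ^ i * g) (i + b) = R.coeff g b := by
  induction i with
  | zero => simp
  | succ i ih =>
    rw [pow_succ', mul_assoc, add_right_comm,
      R.coeff_D_mul_of_degD_le (R.degD_Dpow_mul_le hg i), ih]

lemma mul_eq_sum {f : S} {a : ℕ} (hf : R.degD f ≤ a) (g : S) :
    f * g = ∑ i ∈ range (a + 1), R.ι (R.coeff f i) * (R.D ^ i * g) := by
  conv_lhs => rw [R.eq_sum_range_of_degD_le hf, Finset.sum_mul]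
  simp only [mul_assoc]

lemma degD_ι_mul_le (c : K) {f : S} {w : WithBot ℕ} (hf : R.degD f ≤ w) :
    R.degD (R.ι c * f) ≤ w :=
  R.degD_le_iff.2 fun m hm => by rw [coeff_ι_mul, R.degD_le_iff.1 hf m hm, mul_zero]

lemma degD_mul_le_of_le {f g : S} {a b : ℕ} (hf : R.degD f ≤ a) (hg : R.degD g ≤ b) :
    R.degD (f * g) ≤ (a + b : ℕ) := by
  rw [R.mul_eq_sum hf]
  refine R.degD_sum_le _ _ fun i hi => R.degD_ι_mul_le _ ((R.degD_Dpow_mul_le hg i).trans ?_)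
  have := mem_range.1 hi
  exact_mod_cast (by omega)

lemma coeff_mul_of_degD_le {f g : S} {a b : ℕ} (hf : R.degD f ≤ a) (hg : R.degD g ≤ b) :
    R.coeff (f * g) (a + b) = R.coeff f a * R.coeff g b := by
  rw [R.mul_eq_sum hf, coeff_sum, sum_range_succ, sum_eq_zero fun i hi => ?_, zero_add,
    coeff_ι_mul, R.coeff_Dpow_mul_of_degD_le hg]
  have := mem_range.1 hi
  rw [coeff_ι_mul, R.degD_le_iff.1 (R.degD_Dpow_mul_le hg i) _ (by exact_mod_cast (by omega)),
    mul_zero]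

lemma degD_mul_le (f g : S) : R.degD (f * g) ≤ R.degD f + R.degD g := by
  rcases eq_or_ne f 0 with rfl | hf
  · simp
  rcases eq_or_ne g 0 with rfl | hg
  · simp
  rw [R.degD_eq_natDegD hf, R.degD_eq_natDegD hg]
  exact_mod_cast R.degD_mul_le_of_le (R.degD_eq_natDegD hf).le (R.degD_eq_natDegD hg).le

lemma degD_mul [NoZeroDivisors K] {f g : S} (hf : f ≠ 0) (hg : g ≠ 0) :
    R.degD (f * g) = R.degD f + R.degD g := by
  refine (R.degD_mul_le f g).antisymm ?_
  rw [R.degD_eq_natDegD hf, R.degD_eq_natDegD hg]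
  refine le_of_eq_of_le (by norm_cast) (R.le_degD_of_coeff_ne_zero ?_)
  rw [R.coeff_mul_of_degD_le (R.degD_eq_natDegD hf).le (R.degD_eq_natDegD hg).le]
  exact mul_ne_zero (R.coeff_natDegD_ne_zero hf) (R.coeff_natDegD_ne_zero hg)

variable {R} in
lemma Monic.ne_zero [Nontrivial K] {f : S} (hf : R.Monic f) : f ≠ 0 := by
  rintro rfl
  simp [Monic] at hf

variable {R} in
theorem HermiteForm.degD_le_of_degD_vecMul_le [IsDomain K] {n : ℕ}
    {H : Matrix (Fin n) (Fin n) S} (hH : R.HermiteForm H) {b : Fin n → S} {t : ℕ}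
    (hb : ∀ k, R.degD ((b ᵥ* H) k) ≤ t) (k : Fin n) : R.degD (b k) ≤ t := by
  obtain ⟨hlower, hmonic, hupper⟩ := hH
  induction k using WellFoundedLT.induction with
  | _ k ih =>
    rcases eq_or_ne (b k) 0 with hbk | hbk
    · simp [hbk]
    have hHkk : H k k ≠ 0 := (hmonic k).ne_zero
    obtain ⟨h, hh⟩ : ∃ h : ℕ, R.degD (H k k) = h := ⟨_, R.degD_eq_natDegD hHkk⟩
    have hsplit : b k * H k k = (b ᵥ* H) k - ∑ r ∈ univ.erase k, b r * H r k := by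
      rw [eq_sub_iff_add_eq]
      exact add_sum_erase _ (fun r => b r * H r k) (mem_univ k)
    have hrest : ∀ r ∈ univ.erase k, R.degD (b r * H r k) ≤ t + R.degD (H k k) := by
      intro r hr
      rcases lt_or_gt_of_ne (ne_of_mem_erase hr) with hrk | hkr
      · exact (R.degD_mul_le _ _).trans (add_le_add (ih r hrk) (hupper r k hrk).le)
      · simp [hlower r k hkr]
    have hle : R.degD (b k) + h ≤ t + h := by
      rw [← hh, ← R.degD_mul hbk hHkk, hsplit]
      refine (R.degD_sub_le _ _).trans (max_le ((hb k).trans ?_) (R.degD_sum_le _ _ hrest))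
      rw [hh]
      exact_mod_cast Nat.le_add_right t h
    exact (WithBot.add_le_add_iff_right WithBot.coe_ne_bot).1 hle

noncomputable def ofCoeffs (t : ℕ) : (Fin (t + 1) → K) →+ S :=
  AddMonoidHom.mk' (fun x => ∑ i, R.ι (x i) * R.D ^ (i : ℕ)) fun x y => by
    simp only [Pi.add_apply, map_add, add_mul, sum_add_distrib]

lemma coeff_ofCoeffs {t : ℕ} (x : Fin (t + 1) → K) (i : Fin (t + 1)) :
    R.coeff (R.ofCoeffs t x) i = x i := by
  simp only [ofCoeffs, AddMonoidHom.mk'_apply, coeff_sum, coeff_monomial, Fin.val_inj]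
  exact sum_ite_eq univ i x |>.trans (if_pos (mem_univ i))

lemma degD_ofCoeffs_le {t : ℕ} (x : Fin (t + 1) → K) : R.degD (R.ofCoeffs t x) ≤ t :=
  R.degD_sum_le univ (fun i : Fin (t + 1) => R.ι (x i) * R.D ^ (i : ℕ)) fun i _ =>
    (R.degD_monomial_le _ _).trans (by exact_mod_cast Fin.is_le i)

lemma ofCoeffs_injective (t : ℕ) : Function.Injective (R.ofCoeffs t) :=
  fun x y h => funext fun i => by rw [← R.coeff_ofCoeffs x i, h, R.coeff_ofCoeffs]

lemma ofCoeffs_smul {t : ℕ} (a : K) (x : Fin (t + 1) → K) :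
    R.ofCoeffs t (a • x) = R.ι a * R.ofCoeffs t x := by
  simp only [ofCoeffs, AddMonoidHom.mk'_apply, Pi.smul_apply, smul_eq_mul, map_mul, mul_sum,
    mul_assoc]

variable {n : ℕ}

/-- `(c, q) ↦ c ⬝ V - q • eᵢ`, read on coefficient vectors: `c` is a row of elements of degree
`≤ m`, `q` has degree `≤ s`, and only the coefficients of degree `≤ s` of the result are kept. -/
noncomputable def vecMulSubSingle (m s : ℕ) (V : Matrix (Fin n) (Fin n) S) (i : Fin n) :
    (Fin n → Fin (m + 1) → K) × (Fin (s + 1) → K) →ₗ[K] Fin n → Fin (s + 1) → K where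
  toFun xp k l := R.coeff
    (((fun j => R.ofCoeffs m (xp.1 j)) ᵥ* V - Pi.single i (R.ofCoeffs s xp.2) : Fin n → S) k) l
  map_add' xp yp := by
    have hrow : (fun j => R.ofCoeffs m ((xp + yp).1 j)) =
        (fun j => R.ofCoeffs m (xp.1 j)) + fun j => R.ofCoeffs m (yp.1 j) :=
      funext fun j => map_add _ _ _
    funext k l
    simp only [hrow, add_vecMul, Prod.snd_add, map_add, Pi.single_add, Pi.add_apply,
      Pi.sub_apply, ← coeff_add]
    congr 1
    abel
  map_smul' a xp := by
    have hrow : (fun j => R.ofCoeffs m ((a • xp).1 j)) =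
        R.ι a • fun j => R.ofCoeffs m (xp.1 j) :=
      funext fun j => R.ofCoeffs_smul a (xp.1 j)
    funext k l
    simp only [hrow, smul_vecMul, Prod.smul_snd, ofCoeffs_smul, ← smul_eq_mul (R.ι a),
      Pi.single_smul, ← smul_sub, Pi.smul_apply, RingHom.id_apply]
    rw [smul_eq_mul, coeff_ι_mul]
    rfl

lemma degD_vecMul_le {c : Fin n → S} {A : Matrix (Fin n) (Fin n) S} {m d : ℕ}
    (hc : ∀ j, R.degD (c j) ≤ m) (hA : ∀ i j, R.degD (A i j) ≤ d) (l : Fin n) :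
    R.degD ((c ᵥ* A) l) ≤ (m + d : ℕ) :=
  R.degD_sum_le univ (fun j => c j * A j l) fun j _ => R.degD_mul_le_of_le (hc j) (hA j l)

theorem vecMulSubSingle_injective [IsDomain K] {m d : ℕ} {A U V H : Matrix (Fin n) (Fin n) S}
    (hVU : V * U = 1) (hVH : V * H = A) (hH : R.HermiteForm H)
    (hA : ∀ i j, R.degD (A i j) ≤ d) {i j : Fin n} (hUij : (m : WithBot ℕ) < R.degD (U i j)) :
    Function.Injective (R.vecMulSubSingle m (m + d) V i) := by
  rw [injective_iff_map_eq_zero]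
  rintro ⟨x, p⟩ hxp
  set c : Fin n → S := fun j => R.ofCoeffs m (x j)
  set q := R.ofCoeffs (m + d) p
  have hc : ∀ j, R.degD (c j) ≤ m := fun j => R.degD_ofCoeffs_le (x j)
  have hcVH : ∀ l, R.degD ((c ᵥ* V ᵥ* H) l) ≤ (m + d : ℕ) := by
    rw [vecMul_vecMul, hVH]
    exact R.degD_vecMul_le hc hA
  have hcV := hH.degD_le_of_degD_vecMul_le hcVH
  have hrow : c ᵥ* V = Pi.single i q := by
    funext k
    rw [← sub_eq_zero]
    refine R.eq_zero_of_degD_le_of_coeff_eq_zero ((R.degD_sub_le _ _).trans (max_le (hcV k) ?_))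
      fun l hl => congrFun (congrFun hxp k) ⟨l, Nat.lt_succ_of_le hl⟩
    rcases eq_or_ne k i with rfl | hki
    · simpa using R.degD_ofCoeffs_le p
    · simp [hki]
  have hcU : c = q • U.row i := by
    rw [← single_vecMul, ← hrow, vecMul_vecMul, hVU, vecMul_one]
  have hq : q = 0 := by
    by_contra hq
    have hU0 : U i j ≠ 0 := by
      rintro h0
      simp [h0] at hUij
    refine (hc j).not_gt (hUij.trans_le ?_)
    rw [hcU, Pi.smul_apply, row_apply, smul_eq_mul, R.degD_mul hq hU0, R.degD_eq_natDegD hq]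
    exact le_add_of_nonneg_left (by exact_mod_cast Nat.zero_le _)
  have hp : p = 0 := R.ofCoeffs_injective _ (by rw [map_zero]; exact hq)
  have hx : x = 0 := funext fun j => R.ofCoeffs_injective _ <| by
    rw [Pi.zero_apply, map_zero]
    simpa [hq] using congrFun hcU j
  simp [hx, hp]

theorem degD_le_of_mul_eq_hermiteForm [IsDomain K] {A U H : Matrix (Fin n) (Fin n) S} {d : ℕ}
    (hA : ∀ i j, R.degD (A i j) ≤ d) (hU : IsUnit U) (hUA : U * A = H) (hH : R.HermiteForm H)
    (i j : Fin n) : R.degD (U i j) ≤ ((n - 1) * d : ℕ) := by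
  by_contra! hUij
  obtain ⟨V, hVU, hVH⟩ : ∃ V, V * U = 1 ∧ V * H = A := by
    obtain ⟨u, rfl⟩ := hU
    exact ⟨↑u⁻¹, u.inv_mul, by rw [← hUA, ← Matrix.mul_assoc, u.inv_mul, Matrix.one_mul]⟩
  have hdim := LinearMap.finrank_le_finrank_of_injective
    (R.vecMulSubSingle_injective hVU hVH hH hA hUij)
  simp only [Module.finrank_prod, Module.finrank_pi_fintype, Module.finrank_self, sum_const,
    card_univ, Fintype.card_fin, smul_eq_mul] at hdim
  cases n with
  | zero => exact i.elim0
  | succ n =>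
    simp only [Nat.add_sub_cancel] at hdim
    nlinarith

end DiffPolyRing

theorem degD_unimodular_multiplier_le_general
    {F : Type} [Field F] {S : Type} [Ring S]
    (δ : RatFunc F → RatFunc F)
    (R : DiffPolyRing (RatFunc F) S δ) {n : ℕ}
    (A U H : Matrix (Fin n) (Fin n) S) (d : ℕ)
    (hdeg : ∀ i j, R.degD (A i j) ≤ (d : WithBot ℕ))
    (hU : IsUnit U) (hUA : U * A = H) (hH : R.HermiteForm H) :
    ∀ i j, R.degD (U i j) ≤ (((n - 1) * d : ℕ) : WithBot ℕ) :=
  R.degD_le_of_mul_eq_hermiteForm hdeg hU hUA hH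

/-- if `U·A = H` with `U` unimodular, `H` the Hermite form of the
full-row-rank matrix `A`, and `deg_D A_{ij} ≤ d`, then `deg_D U_{ij} ≤ (n-1)d`. -/
theorem degD_unimodular_multiplier_le
    {F : Type} [Field F] [CharZero F] {S : Type} [Ring S]
    (δ : RatFunc F → RatFunc F)
    (hδadd : ∀ a b : RatFunc F, δ (a + b) = δ a + δ b)
    (hδmul : ∀ a b : RatFunc F, δ (a * b) = a * δ b + δ a * b)
    (R : DiffPolyRing (RatFunc F) S δ) {n : ℕ}
    (A U H : Matrix (Fin n) (Fin n) S) (d : ℕ)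
    (hA : DiffPolyRing.FullRowRank A)
    (hdeg : ∀ i j, R.degD (A i j) ≤ (d : WithBot ℕ))
    (hU : IsUnit U) (hUA : U * A = H) (hH : R.HermiteForm H) :
    ∀ i j, R.degD (U i j) ≤ (((n - 1) * d : ℕ) : WithBot ℕ) :=
  degD_unimodular_multiplier_le_general δ R A U H d hdeg hU hUA hH
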